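/- Assume k has characteristic p > 0. Let f : 𝔾_a^∞ → 𝔾_a^∞ be the morphism of (abelian group)-valued k-functors given at every commutative k-algebra B by (x_1, x_2, x_3, …) ↦ (x_1, x_2 − x_1^p, x_3 − x_2^p, …). Then f is a monomorphism (injective at every B), and the cokernel of f is NOT an additive k-functor. -/

import Mathlib

/-!
Every nonzero additive functor admits a nonzero morphism to `𝔾_a`: a strictly additive one has
its coordinate projections, and in an extension `0 → F' → F → F'' → 0` either `F''` is nonzero,
so that a projection of `F''` composed with `F → F''` works, or `F' ≅ F`.

By the Yoneda lemma a morphism `ψ : 𝔾_a^∞ → 𝔾_a` is determined by the polynomials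
`Qₙ = ψ(X eₙ) ∈ k[X]`, which have no constant term, and `ψ ∘ f = 0` says `Qₙ = Qₙ₊₁(X^p)`.
Comparing degrees, all `Qₙ` vanish, so every morphism from the cokernel of `f` to `𝔾_a` is zero.
Yet the cokernel is nonzero: `X e₀` could only be the image of `(X, X^p, X^{p²}, …)`, which is not
finitely supported.
-/

universe u

open TensorProduct

/-- An (abelian group)-valued `k`-functor: a functor from commutative `k`-algebras
(in universe `u`) to abelian groups. -/
structure AbFunctor (k : Type u) [Field k] : Type (u + 1) where
  obj : ∀ (B : Type u) [CommRing B] [Algebra k B], Type u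
  [grp : ∀ (B : Type u) [CommRing B] [Algebra k B], AddCommGroup (obj B)]
  map : ∀ {B C : Type u} [CommRing B] [Algebra k B] [CommRing C] [Algebra k C],
    (B →ₐ[k] C) → (obj B →+ obj C)
  map_id : ∀ (B : Type u) [CommRing B] [Algebra k B],
    map (AlgHom.id k B) = AddMonoidHom.id (obj B)
  map_comp : ∀ {B C D : Type u} [CommRing B] [Algebra k B] [CommRing C] [Algebra k C]
    [CommRing D] [Algebra k D] (f : B →ₐ[k] C) (g : C →ₐ[k] D),
    map (g.comp f) = (map g).comp (map f)

attribute [instance] AbFunctor.grp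

variable (k : Type u) [Field k]

/-- A morphism of (abelian group)-valued `k`-functors. -/
structure AbHom (F G : AbFunctor k) where
  app : ∀ (B : Type u) [CommRing B] [Algebra k B], F.obj B →+ G.obj B
  naturality : ∀ {B C : Type u} [CommRing B] [Algebra k B] [CommRing C] [Algebra k C]
    (f : B →ₐ[k] C) (x : F.obj B), G.map f (app B x) = app C (F.map f x)

/-- A natural transformation of the underlying set-valued functors
(not required to be additive). -/
structure SetHom (F G : AbFunctor k) where
  app : ∀ (B : Type u) [CommRing B] [Algebra k B], F.obj B → G.obj B
  naturality : ∀ {B C : Type u} [CommRing B] [Algebra k B] [CommRing C] [Algebra k C]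
    (f : B →ₐ[k] C) (x : F.obj B), G.map f (app B x) = app C (F.map f x)

/-- An isomorphism of (abelian group)-valued `k`-functors. -/
structure AbIso (F G : AbFunctor k) where
  hom : AbHom k F G
  inv : AbHom k G F
  hom_inv : ∀ (B : Type u) [CommRing B] [Algebra k B] (x : F.obj B),
    inv.app B (hom.app B x) = x
  inv_hom : ∀ (B : Type u) [CommRing B] [Algebra k B] (x : G.obj B),
    hom.app B (inv.app B x) = x
/-- `𝔾_a^ι`, the direct sum of `ι` copies of the additive group functor,
`B ↦ ⊕_{i : ι} (B, +)`. -/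
noncomputable def Ga (ι : Type u) : AbFunctor k where
  obj B _ _ := ι →₀ B
  grp B _ _ := inferInstance
  map f := Finsupp.mapRange.addMonoidHom f.toRingHom.toAddMonoidHom
  map_id B _ _ := by
    ext x i
    simp [Finsupp.mapRange.addMonoidHom]
  map_comp f g := by
    ext x i a
    simp only [AddMonoidHom.comp_apply, Finsupp.singleAddHom_apply,
      Finsupp.mapRange.addMonoidHom_apply, Finsupp.mapRange_single] <;> rfl
/-- The cokernel of a morphism of (abelian group)-valued `k`-functors,
computed objectwise. -/
noncomputable def AbHom.coker {F G : AbFunctor k} (f : AbHom k F G) : AbFunctor k where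
  obj B _ _ := G.obj B ⧸ (f.app B).range
  grp B _ _ := inferInstance
  map {B C} _ _ _ _ g :=
    QuotientAddGroup.map _ _ (G.map g) (by
      rintro y ⟨x, rfl⟩
      exact ⟨F.map g x, (f.naturality g x).symm⟩)
  map_id B _ _ := by
    apply AddMonoidHom.ext
    intro y
    refine QuotientAddGroup.induction_on y ?_
    intro x
    simp [QuotientAddGroup.map_mk, G.map_id]
  map_comp {B C D} _ _ _ _ _ _ g h := by
    apply AddMonoidHom.ext
    intro y
    refine QuotientAddGroup.induction_on y ?_
    intro x
    simp [QuotientAddGroup.map_mk, G.map_comp]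
/-- A functor is strictly additive if it is isomorphic to `𝔾_a^α` for some
`α ∈ {0, 1, …, ∞}`. -/
def IsStrictlyAdditive (F : AbFunctor k) : Prop :=
  (∃ n : ℕ, Nonempty (AbIso k F (Ga k (ULift.{u} (Fin n))))) ∨
    Nonempty (AbIso k F (Ga k (ULift.{u} ℕ)))
/-- `0 → F' → F → F'' → 0` is a short exact sequence of (abelian group)-valued
`k`-functors (exactness is objectwise). -/
structure IsShortExact {F' F F'' : AbFunctor k} (i : AbHom k F' F)
    (p : AbHom k F F'') : Prop where
  inj : ∀ (B : Type u) [CommRing B] [Algebra k B], Function.Injective (i.app B)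
  surj : ∀ (B : Type u) [CommRing B] [Algebra k B], Function.Surjective (p.app B)
  exact : ∀ (B : Type u) [CommRing B] [Algebra k B] (x : F.obj B),
    p.app B x = 0 ↔ x ∈ Set.range (i.app B)
/-- A functor is additive if it admits a finite filtration with strictly additive
successive quotients; equivalently (and as formalized here), the class of additive
functors is the smallest class containing the strictly additive functors and closed
under extensions with strictly additive quotients. -/
inductive IsAdditive : AbFunctor k → Prop
  | of_strict (F : AbFunctor k) : IsStrictlyAdditive k F → IsAdditive F
  | of_ext {F' F F'' : AbFunctor k} (i : AbHom k F' F) (p : AbHom k F F'') :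
      IsShortExact k i p → IsAdditive F' → IsStrictlyAdditive k F'' → IsAdditive F

variable {k}

noncomputable abbrev GaOne : AbFunctor k where
  obj B _ _ := B
  grp _ _ _ := inferInstance
  map f := f.toRingHom.toAddMonoidHom
  map_id _ _ _ := rfl
  map_comp _ _ := rfl

namespace AbHom

variable {F G H : AbFunctor k}

def comp (g : AbHom k G H) (f : AbHom k F G) : AbHom k F H where
  app B _ _ := (g.app B).comp (f.app B)
  naturality h x := by simp only [AddMonoidHom.comp_apply, g.naturality, f.naturality]

noncomputable def invOfBijective (i : AbHom k F G)
    (hi : ∀ (B : Type u) [CommRing B] [Algebra k B], Function.Bijective (i.app B)) :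
    AbHom k G F where
  app B _ _ := (AddEquiv.ofBijective (i.app B) (hi B)).symm.toAddMonoidHom
  naturality {_ C} _ _ _ _ h y := by
    apply (hi C).injective
    simp only [AddEquiv.coe_toAddMonoidHom]
    rw [← i.naturality, AddEquiv.ofBijective_apply_symm_apply,
      AddEquiv.ofBijective_apply_symm_apply]

theorem invOfBijective_app_apply (i : AbHom k F G)
    (hi : ∀ (B : Type u) [CommRing B] [Algebra k B], Function.Bijective (i.app B))
    {B : Type u} [CommRing B] [Algebra k B] (x : F.obj B) :
    (i.invOfBijective hi).app B (i.app B x) = x :=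
  (AddEquiv.ofBijective (i.app B) (hi B)).symm_apply_apply x

noncomputable def cokerπ (f : AbHom k F G) : AbHom k G (f.coker k) where
  app _ _ _ := QuotientAddGroup.mk' _
  naturality _ _ := rfl

theorem cokerπ_app_eq_zero_iff (f : AbHom k F G) {B : Type u} [CommRing B] [Algebra k B]
    (y : G.obj B) : (cokerπ f).app B y = 0 ↔ y ∈ (f.app B).range :=
  QuotientAddGroup.eq_zero_iff y

theorem cokerπ_app_app (f : AbHom k F G) {B : Type u} [CommRing B] [Algebra k B]
    (x : F.obj B) : (cokerπ f).app B (f.app B x) = 0 :=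
  (cokerπ_app_eq_zero_iff f _).mpr ⟨x, rfl⟩

theorem cokerπ_app_surjective (f : AbHom k F G) (B : Type u) [CommRing B] [Algebra k B] :
    Function.Surjective ((cokerπ f).app B) :=
  QuotientAddGroup.mk'_surjective _

end AbHom

def Ga.proj (ι : Type u) (i : ι) : AbHom k (Ga k ι) GaOne where
  app _ _ _ := Finsupp.applyAddHom i
  naturality _ _ := rfl

theorem Ga.map_single {ι B C : Type u} [CommRing B] [Algebra k B] [CommRing C] [Algebra k C]
    (e : B →ₐ[k] C) (i : ι) (b : B) :
    (Ga k ι).map e (Finsupp.single i b) = Finsupp.single i (e b) :=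
  Finsupp.mapRange_single (hf := map_zero e)

namespace AbFunctor

def IsNonzero (F : AbFunctor k) : Prop :=
  ∃ (B : Type u) (_ : CommRing B) (_ : Algebra k B) (x : F.obj B), x ≠ 0

def HasNonzeroFunctional (F : AbFunctor k) : Prop :=
  ∃ (g : AbHom k F GaOne) (B : Type u) (_ : CommRing B) (_ : Algebra k B) (x : F.obj B),
    g.app B x ≠ 0

end AbFunctor

section Additive

variable {F : AbFunctor k}

theorem AbIso.exists_functional_app_ne_zero {ι : Type u} (e : AbIso k F (Ga k ι))
    {B : Type u} [CommRing B] [Algebra k B] {x : F.obj B} (hx : x ≠ 0) :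
    ∃ g : AbHom k F GaOne, g.app B x ≠ 0 := by
  have hex : e.hom.app B x ≠ 0 := fun h => hx (by rw [← e.hom_inv B x, h, map_zero])
  obtain ⟨i, hi⟩ : ∃ i, (show ι →₀ B from e.hom.app B x) i ≠ 0 := by
    by_contra! h
    exact hex (Finsupp.ext h)
  exact ⟨(Ga.proj ι i).comp e.hom, hi⟩

theorem IsStrictlyAdditive.exists_functional_app_ne_zero (hF : IsStrictlyAdditive k F)
    {B : Type u} [CommRing B] [Algebra k B] {x : F.obj B} (hx : x ≠ 0) :
    ∃ g : AbHom k F GaOne, g.app B x ≠ 0 := by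
  rcases hF with ⟨n, ⟨e⟩⟩ | he
  · exact e.exists_functional_app_ne_zero hx
  · exact he.some.exists_functional_app_ne_zero hx

theorem IsShortExact.hasNonzeroFunctional {F' F'' : AbFunctor k} {i : AbHom k F' F}
    {p : AbHom k F F''} (hip : IsShortExact k i p) (hF'' : IsStrictlyAdditive k F'')
    (hF' : F'.IsNonzero → F'.HasNonzeroFunctional) (hF : F.IsNonzero) :
    F.HasNonzeroFunctional := by
  by_cases hp : ∃ (B : Type u) (_ : CommRing B) (_ : Algebra k B) (x : F.obj B), p.app B x ≠ 0
  · obtain ⟨B, _, _, x, hx⟩ := hp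
    obtain ⟨g, hg⟩ := hF''.exists_functional_app_ne_zero hx
    exact ⟨g.comp p, B, _, _, x, hg⟩
  push Not at hp
  have hi : ∀ (B : Type u) [CommRing B] [Algebra k B], Function.Bijective (i.app B) :=
    fun B _ _ => ⟨hip.inj B, fun x => (hip.exact B x).mp (hp B _ _ x)⟩
  obtain ⟨B, _, _, x, hx⟩ := hF
  obtain ⟨y, rfl⟩ := (hi B).surjective x
  obtain ⟨g, B', _, _, y', hy'⟩ := hF' ⟨B, _, _, y, fun h => hx (by rw [h, map_zero])⟩
  refine ⟨g.comp (i.invOfBijective hi), B', _, _, i.app B' y', ?_⟩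
  simpa only [AbHom.comp, AddMonoidHom.comp_apply, AbHom.invOfBijective_app_apply] using hy'

theorem IsAdditive.hasNonzeroFunctional (hF : IsAdditive k F) (hne : F.IsNonzero) :
    F.HasNonzeroFunctional := by
  induction hF with
  | of_strict F hF =>
    obtain ⟨B, _, _, x, hx⟩ := hne
    obtain ⟨g, hg⟩ := hF.exists_functional_app_ne_zero hx
    exact ⟨g, B, _, _, x, hg⟩
  | of_ext i p hip _ hF'' ih => exact hip.hasNonzeroFunctional hF'' ih hne

end Additive

open Polynomial

theorem Polynomial.eq_zero_of_forall_eq_comp_X_pow {R : Type*} [CommRing R] [IsDomain R]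
    {p : ℕ} (hp : 1 < p) {Q : ℕ → R[X]} (hQ : ∀ n, Q n = (Q (n + 1)).comp (X ^ p))
    (hQ₀ : ∀ n, (Q n).coeff 0 = 0) (n : ℕ) : Q n = 0 := by
  have hcomp : ∀ m, Q n = (Q (n + m)).comp (X ^ p ^ m) := by
    intro m
    induction m with
    | zero => simp
    | succ m ih =>
      rw [ih, hQ (n + m), comp_assoc, X_pow_comp, ← pow_mul, ← pow_succ, add_assoc]
  have hdeg : ∀ m, (Q n).natDegree = (Q (n + m)).natDegree * p ^ m := fun m => by
    rw [hcomp m, natDegree_comp, natDegree_X_pow]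
  obtain ⟨m, hm⟩ : ∃ m, (Q (n + m)).natDegree = 0 := by
    by_contra! h
    set d := (Q n).natDegree
    have : d < p ^ d := Nat.lt_pow_self hp
    have : p ^ d ≤ (Q (n + d)).natDegree * p ^ d := Nat.le_mul_of_pos_left _ (h d).bot_lt
    linarith [hdeg d]
  rw [hcomp m, eq_C_of_natDegree_eq_zero hm, hQ₀, map_zero, zero_comp]

namespace AbHom

variable {ι : Type u}

theorem app_single_eq_aeval (ψ : AbHom k (Ga k ι) GaOne) {B : Type u} [CommRing B]
    [Algebra k B] (i : ι) (b : B) :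
    ψ.app B (Finsupp.single i b) = aeval b (ψ.app k[X] (Finsupp.single i X)) := by
  have := ψ.naturality (aeval b) (Finsupp.single i X)
  rw [Ga.map_single, aeval_X] at this
  exact this.symm

theorem app_eq_zero_of_app_single_X (ψ : AbHom k (Ga k ι) GaOne)
    (hψ : ∀ i, ψ.app k[X] (Finsupp.single i X) = 0) {B : Type u} [CommRing B] [Algebra k B]
    (x : ι →₀ B) : ψ.app B x = 0 := by
  induction x using Finsupp.induction with
  | zero => exact map_zero (ψ.app B)
  | single_add i b x _ _ ih =>
    calc ψ.app B (Finsupp.single i b + x)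
        = ψ.app B (Finsupp.single i b) + ψ.app B x := map_add (ψ.app B) _ _
      _ = 0 := by rw [ih, app_single_eq_aeval, hψ, map_zero, add_zero]

theorem app_single_X_coeff_zero (ψ : AbHom k (Ga k ι) GaOne) (i : ι) :
    (ψ.app k[X] (Finsupp.single i X)).coeff 0 = 0 := by
  rw [coeff_zero_eq_aeval_zero, ← app_single_eq_aeval, Finsupp.single_zero]
  exact map_zero _

end AbHom

def AbHom.IsFaltingsMap (p : ℕ) (f : AbHom k (Ga k (ULift.{u} ℕ)) (Ga k (ULift.{u} ℕ))) :
    Prop :=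
  ∀ (B : Type u) [CommRing B] [Algebra k B] (x : ULift.{u} ℕ →₀ B),
    (show ULift.{u} ℕ →₀ B from f.app B x) (ULift.up 0) = x (ULift.up 0) ∧
    ∀ n : ℕ, (show ULift.{u} ℕ →₀ B from f.app B x) (ULift.up (n + 1)) =
      x (ULift.up (n + 1)) - (x (ULift.up n)) ^ p

namespace AbHom.IsFaltingsMap

variable {p : ℕ} {f : AbHom k (Ga k (ULift.{u} ℕ)) (Ga k (ULift.{u} ℕ))} (hf : f.IsFaltingsMap p)
  {B : Type u} [CommRing B] [Algebra k B]
include hf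

theorem apply_zero_of_app_eq {x y : ULift.{u} ℕ →₀ B} (h : f.app B x = y) :
    x (ULift.up 0) = y (ULift.up 0) := by
  rw [← (hf B x).1, h]

theorem apply_succ_of_app_eq {x y : ULift.{u} ℕ →₀ B} (h : f.app B x = y) (n : ℕ) :
    x (ULift.up (n + 1)) = y (ULift.up (n + 1)) + x (ULift.up n) ^ p := by
  rw [← h, (hf B x).2 n, sub_add_cancel]

theorem injective (hp : p ≠ 0) : Function.Injective (f.app B) := by
  refine (injective_iff_map_eq_zero _).mpr fun (x : ULift.{u} ℕ →₀ B) hx => ?_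
  replace hx : f.app B x = (0 : ULift.{u} ℕ →₀ B) := hx
  have hx' : ∀ n : ℕ, x (ULift.up n) = 0 := by
    intro n
    induction n with
    | zero => rw [hf.apply_zero_of_app_eq hx, Finsupp.zero_apply]
    | succ n ih => rw [hf.apply_succ_of_app_eq hx, ih, zero_pow hp, Finsupp.zero_apply, add_zero]
  exact Finsupp.ext fun ⟨n⟩ => hx' n

theorem single_zero_notMem_range {b : B} (hb : ¬IsNilpotent b) :
    Finsupp.single (ULift.up 0) b ∉ (f.app B).range := by
  rintro ⟨x : ULift.{u} ℕ →₀ B, hx⟩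
  have hpow : ∀ n : ℕ, x (ULift.up n) = b ^ p ^ n := by
    intro n
    induction n with
    | zero => simpa using hf.apply_zero_of_app_eq hx
    | succ n ih => simp [hf.apply_succ_of_app_eq hx, ih, ← pow_mul, pow_succ]
  obtain ⟨⟨n⟩, hn⟩ := Infinite.exists_notMem_finset x.support
  exact hb ⟨p ^ n, (hpow n).symm.trans (Finsupp.notMem_support_iff.mp hn)⟩

theorem app_single (hp : p ≠ 0) (n : ℕ) (b : B) :
    f.app B (Finsupp.single (ULift.up n) b) =
      Finsupp.single (ULift.up n) b - Finsupp.single (ULift.up (n + 1)) (b ^ p) := by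
  refine Finsupp.ext fun ⟨m⟩ => ?_
  cases m with
  | zero => simp [(hf B _).1, Finsupp.single_apply]
  | succ m =>
    rw [(hf B _).2 m, Finsupp.sub_apply]
    rcases eq_or_ne n m with rfl | h
    · simp
    · simp [Finsupp.single_apply, h, zero_pow hp]

theorem functional_eq_zero (hp : 1 < p) (ψ : AbHom k (Ga k (ULift.{u} ℕ)) GaOne)
    (hψ : ∀ (C : Type u) [CommRing C] [Algebra k C] (y : ULift.{u} ℕ →₀ C),
      ψ.app C (f.app C y) = 0)
    (x : ULift.{u} ℕ →₀ B) : ψ.app B x = 0 := by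
  set Q : ℕ → k[X] := fun n => ψ.app k[X] (Finsupp.single (ULift.up n) X)
  have hQ : ∀ n, Q n = (Q (n + 1)).comp (X ^ p) := by
    intro n
    have h := hψ k[X] (Finsupp.single (ULift.up n) X)
    rw [hf.app_single (by lia)] at h
    calc Q n = ψ.app k[X] (Finsupp.single (ULift.up (n + 1)) (X ^ p)) :=
          sub_eq_zero.mp ((map_sub (ψ.app k[X]) _ _).symm.trans h)
      _ = (Q (n + 1)).comp (X ^ p) := ψ.app_single_eq_aeval _ _
  refine ψ.app_eq_zero_of_app_single_X (fun ⟨n⟩ => ?_) x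
  exact eq_zero_of_forall_eq_comp_X_pow hp hQ (fun n => ψ.app_single_X_coeff_zero _) n

end AbHom.IsFaltingsMap

/-- Faltings' example: in characteristic `p > 0`, the morphism
`𝔾_a^∞ → 𝔾_a^∞`, `(x₁, x₂, x₃, …) ↦ (x₁, x₂ - x₁^p, x₃ - x₂^p, …)` is a
monomorphism whose cokernel is not additive. -/
theorem faltings_example {k : Type u} [Field k] (p : ℕ) [CharP k p] (hp : 0 < p)
    (f : AbHom k (Ga k (ULift.{u} ℕ)) (Ga k (ULift.{u} ℕ)))
    (hf : ∀ (B : Type u) [CommRing B] [Algebra k B] (x : ULift.{u} ℕ →₀ B),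
      (show ULift.{u} ℕ →₀ B from f.app B x) (ULift.up 0) = x (ULift.up 0) ∧
      ∀ n : ℕ, (show ULift.{u} ℕ →₀ B from f.app B x) (ULift.up (n + 1)) =
        x (ULift.up (n + 1)) - (x (ULift.up n)) ^ p) :
    (∀ (B : Type u) [CommRing B] [Algebra k B], Function.Injective (f.app B)) ∧
      ¬ IsAdditive k (AbHom.coker k f) := by
  have : NeZero p := ⟨hp.ne'⟩
  have hp₁ : 1 < p := (CharP.char_is_prime_of_pos k p).out.one_lt
  refine ⟨fun B _ _ => AbHom.IsFaltingsMap.injective hf hp.ne', fun hadd => ?_⟩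
  have hne : f.cokerπ.app k[X] (Finsupp.single (ULift.up 0) X) ≠ 0 := fun h =>
    AbHom.IsFaltingsMap.single_zero_notMem_range hf (fun ⟨n, hn⟩ => pow_ne_zero n X_ne_zero hn)
      ((f.cokerπ_app_eq_zero_iff _).mp h)
  obtain ⟨g, B, _, _, x, hgx⟩ := hadd.hasNonzeroFunctional ⟨k[X], _, _, _, hne⟩
  obtain ⟨y, rfl⟩ := f.cokerπ_app_surjective B x
  exact hgx (AbHom.IsFaltingsMap.functional_eq_zero hf hp₁ (g.comp f.cokerπ)
    (fun C _ _ z => (congrArg (g.app C) (f.cokerπ_app_app z)).trans (map_zero _)) y)
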